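/- arXiv:2306.06214 — 2 statements merged into one kernel-verified Lean document; each statement's English description precedes it below -/
import Mathlib

section
/- Rodrigues formula for bicomplex Hermite polynomials (idempotent form): for all m, n ∈ ℕ and every Z = (λ₁, λ₂) ∈ ℂ × ℂ, each idempotent component of 𝐇_{m,n}(Z, Z*) satisfies, for j = 1, 2: (𝐇_{m,n}(Z, Z*))_j = (−1)^{m+n} · e^{|λ_j|²} · D_j, where D_j is obtained by taking the n-th iterated complex derivative of z ↦ exp(−z·w) in the first variable, then the m-th iterated complex derivative of the result in the second variable, evaluated at (λ_j, conj λ_j). In other words 𝐇_{m,n}(Z, Z*) = (−1)^{m+n} e^{|Z|ₖ²} ∂^{m+n}/∂(Z*)^m ∂Z^n (e^{−|Z|ₖ²}). -/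
/-! Componentwise, `𝐇_{m,n}(Z, W)` is the complex Hermite polynomial `H_{m,n}(a, b)`, and the
Rodrigues formula already holds for independent `a, b ∈ ℂ`: the inner derivative is
`(-w)ⁿ e^{-aw}`, and Leibniz's rule for the `m`-th derivative of `wⁿ e^{-aw}` gives
`∑ₖ C(m,k) n!/(n-k)! b^{n-k} (-a)^{m-k} e^{-ab}` at `w = b`, which after multiplying by
`(-1)^{m+n} e^{ab}` is the defining sum (its terms with `k > n` vanish). Taking `b = ā` turns
`e^{ab}` into `e^{|a|²}`. -/

open Complex

/-- The bicomplex Hermite polynomial of the first kind `𝐇_{m,n}(Z,W)`, computed in the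
bicomplex algebra `ℂ × ℂ` (idempotent representation, componentwise operations). -/
noncomputable def hermiteBC (m n : ℕ) (Z W : ℂ × ℂ) : ℂ × ℂ :=
  ∑ k ∈ Finset.range (min m n + 1),
    ((-1 : ℂ) ^ k * (k.factorial : ℂ) * (m.choose k : ℂ) * (n.choose k : ℂ)) •
      (Z ^ (m - k) * W ^ (n - k))

noncomputable def hermiteC (m n : ℕ) (z w : ℂ) : ℂ :=
  ∑ k ∈ Finset.range (min m n + 1),
    (-1 : ℂ) ^ k * (k.factorial : ℂ) * (m.choose k : ℂ) * (n.choose k : ℂ) *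
      (z ^ (m - k) * w ^ (n - k))

theorem hermiteBC_fst (m n : ℕ) (Z W : ℂ × ℂ) :
    (hermiteBC m n Z W).1 = hermiteC m n Z.1 W.1 := by
  simp [hermiteBC, hermiteC, Prod.fst_sum]

theorem hermiteBC_snd (m n : ℕ) (Z W : ℂ × ℂ) :
    (hermiteBC m n Z W).2 = hermiteC m n Z.2 W.2 := by
  simp [hermiteBC, hermiteC, Prod.snd_sum]

theorem hermiteC_eq_sum_range (m n : ℕ) (z w : ℂ) :
    hermiteC m n z w = ∑ k ∈ Finset.range (m + 1),
      (-1 : ℂ) ^ k * (k.factorial : ℂ) * (m.choose k : ℂ) * (n.choose k : ℂ) *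
        (z ^ (m - k) * w ^ (n - k)) := by
  refine Finset.sum_subset (Finset.range_subset_range.2 (by omega)) fun k hk hk' => ?_
  simp only [Finset.mem_range] at hk hk'
  simp [Nat.choose_eq_zero_of_lt (show n < k by omega)]

theorem iteratedDeriv_cexp_neg_mul (n : ℕ) (w : ℂ) :
    iteratedDeriv n (fun z => exp (-(z * w))) = fun z => (-w) ^ n * exp (-(z * w)) := by
  simpa only [neg_mul_eq_neg_mul, mul_comm] using iteratedDeriv_cexp_const_mul n (-w)

theorem iteratedDeriv_pow_mul_cexp_const_mul (m n : ℕ) (c x : ℂ) :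
    iteratedDeriv m (fun w => w ^ n * exp (c * w)) x =
      ∑ k ∈ Finset.range (m + 1),
        (m.choose k : ℂ) * (n.descFactorial k * x ^ (n - k)) * (c ^ (m - k) * exp (c * x)) := by
  rw [iteratedDeriv_fun_mul (by fun_prop) (by fun_prop)]
  simp only [iteratedDeriv_pow, iteratedDeriv_cexp_const_mul]

theorem hermiteC_rodrigues (m n : ℕ) (a b : ℂ) :
    hermiteC m n a b = (-1 : ℂ) ^ (m + n) * exp (a * b) *
      iteratedDeriv m (fun w => iteratedDeriv n (fun z => exp (-(z * w))) a) b := by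
  have inner : (fun w => iteratedDeriv n (fun z => exp (-(z * w))) a) =
      fun w => (-1) ^ n * (w ^ n * exp (-a * w)) := by
    funext w
    simp only [iteratedDeriv_cexp_neg_mul, neg_pow w, neg_mul]
    ring
  rw [inner, iteratedDeriv_const_mul_field, iteratedDeriv_pow_mul_cexp_const_mul,
    hermiteC_eq_sum_range, Finset.mul_sum, Finset.mul_sum]
  refine Finset.sum_congr rfl fun k hk => ?_
  have hkm : k ≤ m := Nat.lt_succ_iff.1 (Finset.mem_range.1 hk)
  have hsign : (-1 : ℂ) ^ (m + n) * ((-1) ^ n * (-1) ^ (m - k)) = (-1) ^ k := by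
    rw [← pow_add, ← pow_add, show m + n + (n + (m - k)) = k + 2 * (n + (m - k)) by omega,
      pow_add, pow_mul]
    norm_num
  have hexp : exp (a * b) * exp (-a * b) = 1 := by rw [← exp_add]; simp
  rw [Nat.descFactorial_eq_factorial_mul_choose, neg_pow a]
  push_cast
  let P := (k.factorial : ℂ) * m.choose k * n.choose k * (a ^ (m - k) * b ^ (n - k))
  linear_combination -P * ((-1 : ℂ) ^ (m + n) * ((-1) ^ n * (-1) ^ (m - k))) * hexp - P * hsign

/-- **Rodrigues formula for the bicomplex Hermite polynomials (idempotent form):**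
for `Z = (λ₁, λ₂)` and each idempotent component `j = 1, 2`,
`(𝐇_{m,n}(Z,Z*))_j = (-1)^{m+n} e^{|λ_j|²} ∂_{w}^m ∂_{z}^n (e^{-zw})|_{(λ_j, λ̄_j)}`,
i.e. `𝐇_{m,n}(Z,Z*) = (-1)^{m+n} e^{|Z|ₖ²} ∂^{m+n}/∂(Z*)^m ∂Z^n (e^{-|Z|ₖ²})`. -/
theorem hermiteBC_rodrigues (m n : ℕ) (Z : ℂ × ℂ) :
    (hermiteBC m n Z (star Z)).1 =
      (-1 : ℂ) ^ (m + n) * Complex.exp ((‖Z.1‖ : ℂ) ^ 2) *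
        iteratedDeriv m
          (fun w => iteratedDeriv n (fun z => Complex.exp (-(z * w))) Z.1)
          (starRingEnd ℂ Z.1) ∧
    (hermiteBC m n Z (star Z)).2 =
      (-1 : ℂ) ^ (m + n) * Complex.exp ((‖Z.2‖ : ℂ) ^ 2) *
        iteratedDeriv m
          (fun w => iteratedDeriv n (fun z => Complex.exp (-(z * w))) Z.2)
          (starRingEnd ℂ Z.2) := by
  simp only [hermiteBC_fst, hermiteBC_snd, hermiteC_rodrigues, Prod.fst_star, Prod.snd_star,
    Complex.star_def, ← Complex.mul_conj', and_self]
end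

section
/- Hyperbolic-valued specialization of the bicomplex generating function: for all U, Z ∈ ℂ × ℂ, Σ_{m=0}^∞ Σ_{n=0}^∞ 𝐇_{m,n}(Z, Z*) · U^m · (U*)^n / (m! n!) = exp(U·Z + (U·Z)* − U·U*), and this value is a hyperbolic number, i.e. both of its idempotent components are real. -/
open Complex

/-- The bicomplex exponential: the componentwise complex exponential on `ℂ × ℂ`. -/
noncomputable def bcExp (Z : ℂ × ℂ) : ℂ × ℂ := (Complex.exp Z.1, Complex.exp Z.2)

/-!
Write the generating function as `exp (u z) * exp (v w) * exp (-(u v))` and multiply out the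
three exponential series. The term indexed by `(k, a, b)` contributes to the monomial
`u ^ (a + k) * v ^ (b + k)`, and collecting the terms with `m = a + k`, `n = b + k` gives the
Hermite coefficient, because
`(-1) ^ k k! C(m, k) C(n, k) / (m! n!) = (-1) ^ k / (k! (m - k)! (n - k)!)`.
For `v = U*`, `w = Z*` the exponent `U Z + (U Z)* - U U*` is self-adjoint, and the exponential
of a self-adjoint element of `ℂ × ℂ` is self-adjoint, i.e. hyperbolic.
-/

open Finset Nat NormedSpace

theorem HasSum.fiberwise_sum_range_min {α : Type*} [AddCommMonoid α] [TopologicalSpace α]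
    [ContinuousAdd α] [RegularSpace α] {f : ℕ × ℕ × ℕ → α} {a : α} (hf : HasSum f a) :
    HasSum (fun p : ℕ × ℕ => ∑ k ∈ range (min p.1 p.2 + 1), f (k, p.1 - k, p.2 - k)) a := by
  let F : (ℕ × ℕ) × ℕ → α := fun ⟨⟨m, n⟩, k⟩ =>
    if k ≤ min m n then f (k, m - k, n - k) else 0
  let ψ : ℕ × ℕ × ℕ → (ℕ × ℕ) × ℕ := fun ⟨k, a, b⟩ => ((a + k, b + k), k)
  have hψ : Function.Injective ψ := by
    rintro ⟨k, a, b⟩ ⟨k', a', b'⟩ h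
    simp only [ψ, Prod.mk.injEq] at h
    grind
  have hFψ : F ∘ ψ = f := by
    ext ⟨k, a, b⟩
    simp [F, ψ]
  have hF_range : ∀ x ∉ Set.range ψ, F x = 0 := by
    rintro ⟨⟨m, n⟩, k⟩ hx
    refine if_neg fun hk => hx ⟨(k, m - k, n - k), ?_⟩
    simp only [ψ, Prod.mk.injEq, and_true]
    omega
  refine (hψ.hasSum_iff hF_range |>.mp (hFψ ▸ hf)).prod_fiberwise fun ⟨m, n⟩ => ?_
  convert hasSum_sum_of_ne_finset_zero (L := SummationFilter.unconditional ℕ)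
    (s := range (min m n + 1)) (f := fun k => F ((m, n), k)) fun k hk => if_neg ?_ using 1
  · exact sum_congr rfl fun k hk => (if_pos (by rw [mem_range] at hk; omega)).symm
  · rw [mem_range] at hk; omega

theorem HasSum.mul_of_summable_norm {R ι κ : Type*} [NormedRing R] [CompleteSpace R]
    {f : ι → R} {g : κ → R} {s t : R} (hf : HasSum f s) (hg : HasSum g t)
    (hf' : Summable fun i => ‖f i‖) (hg' : Summable fun j => ‖g j‖) :
    HasSum (fun x : ι × κ => f x.1 * g x.2) (s * t) :=
  hf.mul hg (summable_mul_of_summable_norm hf' hg')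

section Hermite

variable (𝕂 : Type*) {𝔸 : Type*}

/-- On `ℂ × ℂ`, `hermite ℂ` is `hermiteBC` definitionally. -/
noncomputable def hermite [Field 𝕂] [CommRing 𝔸] [Algebra 𝕂 𝔸] (m n : ℕ) (z w : 𝔸) : 𝔸 :=
  ∑ k ∈ range (min m n + 1),
    ((-1 : 𝕂) ^ k * (k ! : 𝕂) * (m.choose k : 𝕂) * (n.choose k : 𝕂)) • (z ^ (m - k) * w ^ (n - k))

theorem hermite_coeff_div_factorial [Field 𝕂] [CharZero 𝕂] (k a b : ℕ) :
    (((k + a)! : 𝕂) * (k + b)!)⁻¹ * ((-1) ^ k * k ! * (k + a).choose k * (k + b).choose k) =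
      (-1) ^ k * ((k ! : 𝕂) * a ! * b !)⁻¹ := by
  rw [Nat.cast_add_choose, Nat.cast_add_choose]
  field_simp [Nat.factorial_ne_zero]

variable {𝕂}

theorem hermite_summand_div_factorial_eq [Field 𝕂] [CharZero 𝕂] [CommRing 𝔸] [Algebra 𝕂 𝔸]
    (k a b : ℕ) (u v z w : 𝔸) :
    (((k + a)! : 𝕂) * (k + b)!)⁻¹ •
        (((-1 : 𝕂) ^ k * k ! * (k + a).choose k * (k + b).choose k) • (z ^ a * w ^ b) *
          u ^ (k + a) * v ^ (k + b)) =
      ((k ! : 𝕂)⁻¹ • (-(u * v)) ^ k) *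
        (((a ! : 𝕂)⁻¹ • (u * z) ^ a) * ((b ! : 𝕂)⁻¹ • (v * w) ^ b)) := by
  rw [← neg_one_smul 𝕂 (u * v), smul_pow]
  simp only [smul_mul_assoc, mul_smul_comm, smul_smul, hermite_coeff_div_factorial]
  congr 1 <;> ring

variable (𝕂) in
theorem hasSum_hermite_generating [NontriviallyNormedField 𝕂] [CharZero 𝕂]
    [ContinuousSMul ℚ 𝕂] [NormedCommRing 𝔸] [NormedAlgebra 𝕂 𝔸] [CompleteSpace 𝔸]
    (u v z w : 𝔸) :
    HasSum
      (fun p : ℕ × ℕ => ((p.1 ! : 𝕂) * p.2 !)⁻¹ • (hermite 𝕂 p.1 p.2 z w * u ^ p.1 * v ^ p.2))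
      (exp (u * z + v * w - u * v)) := by
  let e (x : 𝔸) (n : ℕ) : 𝔸 := (n ! : 𝕂)⁻¹ • x ^ n
  have hexp (x : 𝔸) : HasSum (e x) (exp x) := exp_series_hasSum_exp' x
  have hnorm (x : 𝔸) : Summable fun n => ‖e x n‖ := norm_expSeries_summable' x
  -- `exp_add` would need a `NormedAlgebra ℚ 𝔸` instance; the radius of convergence is `∞`.
  have hball (x : 𝔸) : x ∈ Metric.eball 0 (expSeries 𝕂 𝔸).radius :=
    (expSeries_radius_eq_top 𝕂 𝔸).symm ▸ edist_lt_top _ _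
  have hprod := (hexp (-(u * v))).mul_of_summable_norm
    ((hexp (u * z)).mul_of_summable_norm (hexp (v * w)) (hnorm _) (hnorm _))
    (hnorm _) ((hnorm _).mul_norm (hnorm _))
  rw [← exp_add_of_mem_ball (hball _) (hball _), ← exp_add_of_mem_ball (hball _) (hball _)]
    at hprod
  convert hprod.fiberwise_sum_range_min using 1
  · ext ⟨m, n⟩
    rw [hermite, sum_mul, sum_mul, smul_sum]
    refine sum_congr rfl fun k hk => ?_
    rw [mem_range] at hk
    obtain ⟨a, rfl⟩ := Nat.exists_eq_add_of_le (m := k) (n := m) (by omega)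
    obtain ⟨b, rfl⟩ := Nat.exists_eq_add_of_le (m := k) (n := n) (by omega)
    simp only [Nat.add_sub_cancel_left]
    exact hermite_summand_div_factorial_eq k a b u v z w
  · congr 1; ring

end Hermite

theorem bcExp_eq_exp (Z : ℂ × ℂ) : bcExp Z = NormedSpace.exp Z := by
  ext <;> simp [bcExp, Complex.exp_eq_exp_ℂ]

theorem IsSelfAdjoint.im_fst_eq_zero_and_im_snd_eq_zero {p : ℂ × ℂ} (hp : IsSelfAdjoint p) :
    p.1.im = 0 ∧ p.2.im = 0 :=
  ⟨conj_eq_iff_im.mp (congrArg Prod.fst hp), conj_eq_iff_im.mp (congrArg Prod.snd hp)⟩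

/-- **Hyperbolic-valued specialization of the bicomplex generating function:**
`∑_{m,n} 𝐇_{m,n}(Z,Z*) U^m (U*)^n/(m! n!) = exp(UZ + (UZ)* - U U*)`, and this value is a
hyperbolic number: both idempotent components are real. -/
theorem hermiteBC_generating_star_hyperbolic (U Z : ℂ × ℂ) :
    HasSum
      (fun p : ℕ × ℕ =>
        ((p.1.factorial : ℂ) * (p.2.factorial : ℂ))⁻¹ •
          (hermiteBC p.1 p.2 Z (star Z) * U ^ p.1 * (star U) ^ p.2))
      (bcExp (U * Z + star (U * Z) - U * star U)) ∧
    (bcExp (U * Z + star (U * Z) - U * star U)).1.im = 0 ∧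
    (bcExp (U * Z + star (U * Z) - U * star U)).2.im = 0 := by
  have hX : IsSelfAdjoint (U * Z + star (U * Z) - U * star U) :=
    (IsSelfAdjoint.add_star_self _).sub (.mul_star_self U)
  rw [bcExp_eq_exp]
  refine ⟨?_, hX.exp.im_fst_eq_zero_and_im_snd_eq_zero⟩
  rw [star_mul']
  exact hasSum_hermite_generating ℂ U (star U) Z (star Z)
end
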